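/- Let p be prime, n ≥ 1, and l = max{t : p^t ≤ s_p(n)}. Then there exist k with 1 ≤ k ≤ n and positive integers j_1,...,j_k with j_1+...+j_k = n such that v_p(k · j_1!···j_k!) = v_p(n!) + l. In particular one may take k = p^l. -/

import Mathlib

/-- base-p digit sum -/
def sp (p n : ℕ) : ℕ := (Nat.digits p n).sum

/-!
By Legendre's formula `(p - 1) v_p(m!) = m - s_p(m)`, a composition `j₁ + ⋯ + j_k = n` satisfies
`v_p(j₁! ⋯ j_k!) = v_p(n!)` exactly when its parts add up without carries in base `p`, i.e.
`s_p(j₁) + ⋯ + s_p(j_k) = s_p(n)`. Such a composition with any number `k ≤ s_p(n)` of parts is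
obtained by repeatedly splitting off `p ^ e`, where `p ^ e` is the place of the lowest nonzero
digit. Taking `k = p ^ l` then adds exactly `l` to the valuation.
-/

open Finset Nat

section DigitSum

variable {p : ℕ}

lemma sp_add_mul (hp : 1 < p) {r : ℕ} (hr : r < p) (q : ℕ) :
    sp p (r + p * q) = r + sp p q := by
  by_cases h : r = 0 ∧ q = 0
  · simp [h.1, h.2]
  · rw [sp, Nat.digits_add p hp r q hr (by tauto), List.sum_cons, sp]

lemma sp_pow_mul (hp : 1 < p) (e a : ℕ) : sp p (p ^ e * a) = sp p a := by
  rcases a.eq_zero_or_pos with rfl | ha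
  · simp
  · simp [sp, Nat.digits_base_pow_mul hp ha]

lemma sp_pow (hp : 1 < p) (e : ℕ) : sp p (p ^ e) = 1 := by
  simpa [sp, Nat.digits_of_lt p 1 one_ne_zero hp] using sp_pow_mul hp e 1

lemma sp_pos (p : ℕ) {n : ℕ} (hn : n ≠ 0) : 0 < sp p n :=
  List.sum_pos_iff_exists_pos_nat.mpr ⟨_, List.getLast_mem (Nat.digits_ne_nil_iff_ne_zero.mpr hn),
    Nat.pos_of_ne_zero (Nat.getLast_digit_ne_zero p hn)⟩

/-- `p ^ e` is the place of the lowest nonzero digit of `m`. -/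
lemma exists_pow_le_and_sp_sub_pow_add_one (hp : 1 < p) {m : ℕ} (hm : m ≠ 0) :
    ∃ e, p ^ e ≤ m ∧ sp p (m - p ^ e) + 1 = sp p m := by
  obtain ⟨e, a, hpa, rfl⟩ := Nat.exists_eq_pow_mul_and_not_dvd hm p hp.ne'
  rw [← Nat.mod_add_div a p] at hpa ⊢
  obtain ⟨r, hr, hrp⟩ : ∃ r, a % p = r ∧ r < p := ⟨_, rfl, Nat.mod_lt a (by omega)⟩
  rw [hr] at hpa ⊢
  have hr0 : r ≠ 0 := by rintro rfl; simp at hpa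
  have hsub : p ^ e * (r + p * (a / p)) - p ^ e = p ^ e * (r - 1 + p * (a / p)) := by
    rw [← Nat.mul_sub_one]; congr 1; omega
  refine ⟨e, Nat.le_mul_of_pos_right _ (by omega), ?_⟩
  rw [hsub, sp_pow_mul hp, sp_pow_mul hp, sp_add_mul hp (by omega), sp_add_mul hp hrp]
  omega

lemma exists_fin_sum_eq_and_sum_sp_eq (hp : 1 < p) (k : ℕ) {m : ℕ} (hk : k + 1 ≤ sp p m) :
    ∃ j : Fin (k + 1) → ℕ, (∀ i, 1 ≤ j i) ∧ ∑ i, j i = m ∧ ∑ i, sp p (j i) = sp p m := by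
  induction k generalizing m with
  | zero =>
    have hm : m ≠ 0 := by rintro rfl; simp [sp] at hk
    exact ⟨fun _ => m, fun _ => one_le_iff_ne_zero.mpr hm, by simp, by simp⟩
  | succ k ih =>
    have hm : m ≠ 0 := by rintro rfl; simp [sp] at hk
    obtain ⟨e, hle, hsp⟩ := exists_pow_le_and_sp_sub_pow_add_one hp hm
    obtain ⟨j, hpos, hsum, hspsum⟩ := ih (m := m - p ^ e) (by omega)
    refine ⟨Fin.cons (p ^ e) j, Fin.cases (Nat.one_le_pow _ _ (by omega)) hpos, ?_, ?_⟩
    all_goals rw [Fin.sum_univ_succ]; simp only [Fin.cons_zero, Fin.cons_succ]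
    · omega
    · rw [hspsum, sp_pow hp]; omega

end DigitSum

section Legendre

variable {p : ℕ} [Fact p.Prime]

lemma padicValNat_finset_prod {ι : Type*} (s : Finset ι) {f : ι → ℕ} (hf : ∀ i ∈ s, f i ≠ 0) :
    padicValNat p (∏ i ∈ s, f i) = ∑ i ∈ s, padicValNat p (f i) := by
  simp only [← Nat.factorization_def _ Fact.out, Nat.factorization_prod hf, Finsupp.finsetSum_apply]

lemma sub_one_mul_padicValNat_prod_factorial {ι : Type*} (s : Finset ι) (j : ι → ℕ) :
    (p - 1) * padicValNat p (∏ i ∈ s, (j i)!) = ∑ i ∈ s, j i - ∑ i ∈ s, sp p (j i) := by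
  rw [padicValNat_finset_prod s fun i _ => (j i).factorial_ne_zero, mul_sum,
    ← sum_tsub_distrib s (g := fun i => sp p (j i)) fun i _ => Nat.digit_sum_le p (j i)]
  exact sum_congr rfl fun i _ => sub_one_mul_padicValNat_factorial (j i)

lemma padicValNat_prod_factorial_eq {ι : Type*} (s : Finset ι) (j : ι → ℕ) {n : ℕ}
    (hsum : ∑ i ∈ s, j i = n) (hsp : ∑ i ∈ s, sp p (j i) = sp p n) :
    padicValNat p (∏ i ∈ s, (j i)!) = padicValNat p n ! := by
  have hp : 0 < p - 1 := Nat.sub_pos_of_lt (Fact.out : p.Prime).one_lt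
  apply Nat.eq_of_mul_eq_mul_left hp
  rw [sub_one_mul_padicValNat_prod_factorial, hsum, hsp, sub_one_mul_padicValNat_factorial, sp]

end Legendre

theorem exists_composition_padicValNat_eq (p : ℕ) (hp : p.Prime) (n : ℕ) (hn : 1 ≤ n)
    (l : ℕ) (hl : l = Nat.log p (sp p n)) :
    ∃ k : ℕ, 1 ≤ k ∧ k ≤ n ∧ k = p ^ l ∧
      ∃ j : Fin k → ℕ, (∀ i, 1 ≤ j i) ∧ (∑ i, j i = n) ∧
        padicValNat p (k * ∏ i, Nat.factorial (j i)) =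
          padicValNat p n.factorial + l := by
  have : Fact p.Prime := ⟨hp⟩
  have hl_le : p ^ l ≤ sp p n := hl ▸ pow_log_le_self p (sp_pos p (by omega)).ne'
  obtain ⟨k, hk⟩ : ∃ k, p ^ l = k + 1 := exists_eq_add_one.mpr (pow_pos hp.pos l)
  obtain ⟨j, hpos, hsum, hsp⟩ := exists_fin_sum_eq_and_sum_sp_eq hp.one_lt k (hk ▸ hl_le)
  refine ⟨k + 1, by omega, (hk ▸ hl_le).trans (digit_sum_le p n), hk.symm, j, hpos, hsum, ?_⟩
  rw [padicValNat.mul (by omega) (prod_ne_zero_iff.mpr fun i _ => factorial_ne_zero _),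
    padicValNat_prod_factorial_eq univ j hsum hsp, ← hk, padicValNat.prime_pow, add_comm]
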